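/- arXiv:2408.07169 — 4 statements merged into one kernel-verified Lean document; each statement's English description precedes it below -/
import Mathlib

section
/- For every real h > 0 there exists a unique real β with 0 < β < 3 such that F(β, h) = 0. (This β = β*(h) is the resonant transverse wave number squared; moreover every positive root of F(·, h) lies in (0,3), so β*(h) is the unique positive zero of F(·, h).) -/
/-- `F β h = 3 tanh(h)^{1/2} − (1+β)^{1/4} tanh(h(1+β)^{1/2})^{1/2}
      − (4+β)^{1/4} tanh(h(4+β)^{1/2})^{1/2}`. -/
noncomputable def F (β h : ℝ) : ℝ :=
  3 * Real.sqrt (Real.tanh h)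
    - (1 + β) ^ ((1 : ℝ) / 4) * Real.sqrt (Real.tanh (h * Real.sqrt (1 + β)))
    - (4 + β) ^ ((1 : ℝ) / 4) * Real.sqrt (Real.tanh (h * Real.sqrt (4 + β)))

lemma tanh_eq' (x : ℝ) : Real.tanh x = (Real.exp x ^ 2 - 1) / (Real.exp x ^ 2 + 1) := by
  rw [Real.tanh_eq_sinh_div_cosh, Real.sinh_eq, Real.cosh_eq, Real.exp_neg]
  have h := (Real.exp_pos x).ne'
  have h2 : Real.exp x + (Real.exp x)⁻¹ > 0 := by positivity
  field_simp

lemma tanh_mono {x y : ℝ} (hxy : x ≤ y) : Real.tanh x ≤ Real.tanh y := by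
  rw [tanh_eq', tanh_eq']
  have ha := Real.exp_pos x
  have hb := Real.exp_pos y
  have hab : Real.exp x ≤ Real.exp y := Real.exp_le_exp.2 hxy
  rw [div_le_div_iff₀ (by positivity) (by positivity)]
  nlinarith [sq_nonneg (Real.exp x + Real.exp y)]

lemma tanh_pos' {x : ℝ} (hx : 0 < x) : 0 < Real.tanh x := by
  rw [tanh_eq']
  have h1 : 1 < Real.exp x := by
    have := Real.add_one_lt_exp (ne_of_gt hx); linarith
  have h2 : 1 < Real.exp x ^ 2 := by nlinarith
  exact div_pos (by linarith) (by positivity)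

lemma tanh_two_mul_lt {x : ℝ} (hx : 0 < x) : Real.tanh (2 * x) < 2 * Real.tanh x := by
  rw [tanh_eq', tanh_eq']
  have ha : 1 < Real.exp x := by
    have := Real.add_one_lt_exp (ne_of_gt hx); linarith
  have h2 : Real.exp (2 * x) = Real.exp x ^ 2 := by
    rw [two_mul, Real.exp_add]; ring
  rw [h2]
  set u : ℝ := Real.exp x ^ 2 with hu
  have hu1 : 1 < u := by nlinarith
  rw [div_lt_iff₀ (by positivity), mul_comm]
  rw [show (2:ℝ) * ((u - 1) / (u + 1)) = 2 * (u - 1) / (u + 1) by ring]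
  rw [← mul_div_assoc, lt_div_iff₀ (by positivity)]
  nlinarith [mul_pos (mul_pos (sub_pos.2 hu1) (sub_pos.2 hu1)) (sub_pos.2 hu1)]

lemma rpow_quarter_gt {a b : ℝ} (ha : 0 ≤ a) (hb : 0 ≤ b) (h : b ^ (4:ℕ) < a) :
    b < a ^ ((1:ℝ)/4) := by
  by_contra hle
  push_neg at hle
  have h4 : (a ^ ((1:ℝ)/4)) ^ (4:ℕ) = a := by
    rw [← Real.rpow_natCast (a ^ ((1:ℝ)/4)) 4, ← Real.rpow_mul ha]
    norm_num
  have := pow_le_pow_left₀ (Real.rpow_nonneg ha _) hle 4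
  rw [h4] at this
  linarith

lemma Gmono (h : ℝ) (hh : 0 < h) {s t : ℝ} (hs : 1 ≤ s) (hst : s < t) :
    s ^ ((1:ℝ)/4) * Real.sqrt (Real.tanh (h * Real.sqrt s)) <
      t ^ ((1:ℝ)/4) * Real.sqrt (Real.tanh (h * Real.sqrt t)) := by
  have hs0 : 0 < s := by linarith
  have ha : s ^ ((1:ℝ)/4) < t ^ ((1:ℝ)/4) := Real.rpow_lt_rpow hs0.le hst (by norm_num)
  have hb : Real.sqrt (Real.tanh (h * Real.sqrt s)) ≤ Real.sqrt (Real.tanh (h * Real.sqrt t)) := by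
    apply Real.sqrt_le_sqrt
    apply tanh_mono
    exact mul_le_mul_of_nonneg_left (Real.sqrt_le_sqrt hst.le) hh.le
  have hbpos : 0 < Real.sqrt (Real.tanh (h * Real.sqrt s)) :=
    Real.sqrt_pos.2 (tanh_pos' (mul_pos hh (Real.sqrt_pos.2 hs0)))
  exact mul_lt_mul ha hb hbpos (Real.rpow_nonneg (by linarith) _)

lemma F_anti (h : ℝ) (hh : 0 < h) {b1 b2 : ℝ} (hb1 : 0 ≤ b1) (hb : b1 < b2) :
    F b2 h < F b1 h := by
  unfold F
  have g1 := Gmono h hh (show (1:ℝ) ≤ 1 + b1 by linarith) (show 1 + b1 < 1 + b2 by linarith)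
  have g4 := Gmono h hh (show (1:ℝ) ≤ 4 + b1 by linarith) (show 4 + b1 < 4 + b2 by linarith)
  linarith

lemma sqrt_four : Real.sqrt 4 = 2 := by
  rw [show (4:ℝ) = 2^2 by norm_num, Real.sqrt_sq (by norm_num)]

lemma F_zero_pos (h : ℝ) (hh : 0 < h) : 0 < F 0 h := by
  unfold F
  norm_num [Real.one_rpow, Real.sqrt_one, sqrt_four]
  have h44 : (4:ℝ) ^ ((1:ℝ)/4) = Real.sqrt 2 := by
    rw [Real.sqrt_eq_rpow, show (4:ℝ) = 2^(2:ℕ) by norm_num, ← Real.rpow_natCast 2 2,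
      ← Real.rpow_mul (by norm_num)]
    norm_num
  rw [h44]
  have key : Real.tanh (h * 2) < 2 * Real.tanh h := by
    rw [mul_comm]; exact tanh_two_mul_lt hh
  have t0 : 0 < Real.tanh h := tanh_pos' hh
  have t2 : 0 < Real.tanh (h * 2) := tanh_pos' (by linarith)
  have lhs : Real.sqrt 2 * Real.sqrt (Real.tanh (h * 2)) = Real.sqrt (2 * Real.tanh (h * 2)) :=
    (Real.sqrt_mul (by norm_num) _).symm
  have rhs : Real.sqrt (4 * Real.tanh h) = 2 * Real.sqrt (Real.tanh h) := by
    rw [Real.sqrt_mul (by norm_num), sqrt_four]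
  have : Real.sqrt (2 * Real.tanh (h * 2)) < Real.sqrt (4 * Real.tanh h) :=
    Real.sqrt_lt_sqrt (by positivity) (by linarith)
  rw [lhs]
  linarith [rhs ▸ this]

lemma F_three_neg (h : ℝ) (hh : 0 < h) : F 3 h < 0 := by
  unfold F
  norm_num
  have s0 : 0 < Real.sqrt (Real.tanh h) := Real.sqrt_pos.2 (tanh_pos' hh)
  have h1 : (7/5 : ℝ) < (4:ℝ) ^ ((1:ℝ)/4) := rpow_quarter_gt (by norm_num) (by norm_num) (by norm_num)
  have h2 : (8/5 : ℝ) < (7:ℝ) ^ ((1:ℝ)/4) := rpow_quarter_gt (by norm_num) (by norm_num) (by norm_num)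
  have h3 : Real.sqrt (Real.tanh h) ≤ Real.sqrt (Real.tanh (h * Real.sqrt 4)) := by
    apply Real.sqrt_le_sqrt; apply tanh_mono
    rw [sqrt_four]; nlinarith
  have h4 : Real.sqrt (Real.tanh h) ≤ Real.sqrt (Real.tanh (h * Real.sqrt 7)) := by
    apply Real.sqrt_le_sqrt; apply tanh_mono
    nlinarith [Real.sq_sqrt (show (0:ℝ) ≤ 7 by norm_num), Real.sqrt_nonneg 7,
      Real.sqrt_le_sqrt (show (1:ℝ) ≤ 7 by norm_num), Real.sqrt_one]
  have A : (7/5 : ℝ) * Real.sqrt (Real.tanh h)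
      < (4:ℝ) ^ ((1:ℝ)/4) * Real.sqrt (Real.tanh (h * Real.sqrt 4)) := by
    calc (7/5 : ℝ) * Real.sqrt (Real.tanh h)
        < (4:ℝ) ^ ((1:ℝ)/4) * Real.sqrt (Real.tanh h) := by nlinarith
      _ ≤ _ := mul_le_mul_of_nonneg_left h3 (Real.rpow_nonneg (by norm_num) _)
  have B : (8/5 : ℝ) * Real.sqrt (Real.tanh h)
      < (7:ℝ) ^ ((1:ℝ)/4) * Real.sqrt (Real.tanh (h * Real.sqrt 7)) := by
    calc (8/5 : ℝ) * Real.sqrt (Real.tanh h)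
        < (7:ℝ) ^ ((1:ℝ)/4) * Real.sqrt (Real.tanh h) := by nlinarith
      _ ≤ _ := mul_le_mul_of_nonneg_left h4 (Real.rpow_nonneg (by norm_num) _)
  linarith

lemma continuous_tanh' : Continuous Real.tanh := by
  have : Real.tanh = fun x => Real.sinh x / Real.cosh x :=
    funext fun x => Real.tanh_eq_sinh_div_cosh x
  rw [this]
  exact Real.continuous_sinh.div Real.continuous_cosh fun x => (Real.cosh_pos x).ne'

lemma F_cont (h : ℝ) : Continuous (fun β : ℝ => F β h) := by
  unfold F
  have c4 : Continuous (fun x : ℝ => x ^ ((1:ℝ)/4)) :=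
    Real.continuous_rpow_const (by norm_num)
  have cadd1 : Continuous (fun β : ℝ => 1 + β) := by continuity
  have cadd4 : Continuous (fun β : ℝ => 4 + β) := by continuity
  have term : ∀ g : ℝ → ℝ, Continuous g →
      Continuous (fun β : ℝ => g β ^ ((1:ℝ)/4) * Real.sqrt (Real.tanh (h * Real.sqrt (g β)))) := by
    intro g hg
    exact (c4.comp hg).mul
      (Real.continuous_sqrt.comp (continuous_tanh'.comp
        (continuous_const.mul (Real.continuous_sqrt.comp hg))))
  exact (continuous_const.sub (term _ cadd1)).sub (term _ cadd4)

/-- For every `h > 0` there is a unique `β ∈ (0,3)` with `F β h = 0`; moreover every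
positive root of `F (·, h)` lies in `(0,3)`. -/
theorem stmt0 (h : ℝ) (hh : 0 < h) :
    (∃! β : ℝ, 0 < β ∧ β < 3 ∧ F β h = 0) ∧
    (∀ β : ℝ, 0 < β → F β h = 0 → β < 3) := by
  have F0 := F_zero_pos h hh
  have F3 := F_three_neg h hh
  have anti : ∀ b1 b2 : ℝ, 0 ≤ b1 → b1 < b2 → F b2 h < F b1 h := fun _ _ a b => F_anti h hh a b
  -- existence via IVT
  have hsub := intermediate_value_Icc' (show (0:ℝ) ≤ 3 by norm_num)
    ((F_cont h).continuousOn : ContinuousOn (fun β : ℝ => F β h) (Set.Icc 0 3))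
  have h0mem : (0:ℝ) ∈ Set.Icc (F 3 h) (F 0 h) := ⟨F3.le, F0.le⟩
  obtain ⟨β, hβmem, hβ0⟩ := hsub h0mem
  have hβpos : 0 < β := by
    rcases lt_or_eq_of_le hβmem.1 with hlt | heq
    · exact hlt
    · exfalso; rw [← heq] at hβ0; simp only at hβ0; linarith
  have hβ3 : β < 3 := by
    rcases lt_or_eq_of_le hβmem.2 with hlt | heq
    · exact hlt
    · exfalso; rw [heq] at hβ0; simp only at hβ0; linarith
  constructor
  · refine ⟨β, ⟨hβpos, hβ3, hβ0⟩, ?_⟩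
    rintro y ⟨hy0, hy3, hyF⟩
    rcases lt_trichotomy y β with hlt | heq | hgt
    · have := anti y β hy0.le hlt
      rw [hyF] at this; simp only at hβ0; linarith
    · exact heq
    · have := anti β y hβpos.le hgt
      rw [hyF] at this; simp only at hβ0; linarith
  · intro b hb hFb
    by_contra hge
    push_neg at hge
    rcases lt_or_eq_of_le hge with hlt | heq
    · have := anti 3 b (by norm_num) hlt
      linarith
    · rw [heq] at F3; linarith
end

section
/- For every fixed real h > 0, the function β ↦ F(β, h) is strictly decreasing on (0, ∞). -/
lemma tanh_lt_tanh' {a b : ℝ} (hab : a < b) : Real.tanh a < Real.tanh b := by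
  rw [Real.tanh_eq_sinh_div_cosh, Real.tanh_eq_sinh_div_cosh,
    div_lt_div_iff₀ (Real.cosh_pos a) (Real.cosh_pos b)]
  have : 0 < Real.sinh (b - a) := Real.sinh_pos_iff.2 (by linarith)
  rw [Real.sinh_sub] at this
  nlinarith [this]

lemma tanh_pos'_s3 {a : ℝ} (ha : 0 < a) : 0 < Real.tanh a := by
  rw [Real.tanh_eq_sinh_div_cosh]
  exact div_pos (Real.sinh_pos_iff.2 ha) (Real.cosh_pos _)

lemma term_lt {h c x y : ℝ} (hh : 0 < h) (hc : 0 < c) (hx : 0 < x) (hxy : x < y) :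
    (c + x) ^ ((1 : ℝ) / 4) * Real.sqrt (Real.tanh (h * Real.sqrt (c + x)))
      < (c + y) ^ ((1 : ℝ) / 4) * Real.sqrt (Real.tanh (h * Real.sqrt (c + y))) := by
  have hcx : 0 < c + x := by linarith
  have hcy : c + x < c + y := by linarith
  have h1 : (c + x) ^ ((1 : ℝ) / 4) < (c + y) ^ ((1 : ℝ) / 4) :=
    Real.rpow_lt_rpow (le_of_lt hcx) hcy (by norm_num)
  have hs : Real.sqrt (c + x) < Real.sqrt (c + y) := Real.sqrt_lt_sqrt (le_of_lt hcx) hcy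
  have ht : Real.tanh (h * Real.sqrt (c + x)) < Real.tanh (h * Real.sqrt (c + y)) :=
    tanh_lt_tanh' (by exact mul_lt_mul_of_pos_left hs hh)
  have htp : 0 < Real.tanh (h * Real.sqrt (c + x)) :=
    tanh_pos'_s3 (mul_pos hh (Real.sqrt_pos.2 hcx))
  have h2 : Real.sqrt (Real.tanh (h * Real.sqrt (c + x)))
      < Real.sqrt (Real.tanh (h * Real.sqrt (c + y))) :=
    Real.sqrt_lt_sqrt (le_of_lt htp) ht
  exact mul_lt_mul'' h1 h2 (Real.rpow_nonneg (le_of_lt hcx) _) (Real.sqrt_nonneg _)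

/-- For each fixed `h > 0`, the map `β ↦ F β h` is strictly decreasing on `(0, ∞)`. -/
theorem stmt3 (h : ℝ) (hh : 0 < h) :
    StrictAntiOn (fun β => F β h) (Set.Ioi (0 : ℝ)) := by
  intro x hx y hy hxy
  simp only [F]
  have h1 := term_lt hh (by norm_num : (0:ℝ) < 1) (Set.mem_Ioi.1 hx) hxy
  have h4 := term_lt hh (by norm_num : (0:ℝ) < 4) (Set.mem_Ioi.1 hx) hxy
  linarith
end

section
/- Let b : ℝ → ℝ be any function such that for every h > 0 one has 0 < b(h) < 3 and F(b(h), h) = 0. Then b(h)/h² tends to 4/3 as h → 0⁺; i.e., β*(h) = (4/3)h² + o(h²) as h → 0⁺. -/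
open Real

lemma hasDerivAt_tanh (x : ℝ) : HasDerivAt Real.tanh (1 - Real.tanh x ^ 2) x := by
  have h := (Real.hasDerivAt_sinh x).div (Real.hasDerivAt_cosh x) (ne_of_gt (Real.cosh_pos x))
  have e : Real.tanh = fun y => Real.sinh y / Real.cosh y :=
    funext fun y => Real.tanh_eq_sinh_div_cosh y
  rw [e]
  refine h.congr_deriv ?_
  have hc := Real.cosh_pos x
  have hsq := Real.cosh_sq_sub_sinh_sq x
  field_simp

lemma tanh_sq_lt_one (x : ℝ) : Real.tanh x ^ 2 < 1 := by
  have hc := Real.cosh_pos x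
  have hsq := Real.cosh_sq_sub_sinh_sq x
  rw [Real.tanh_eq_sinh_div_cosh, div_pow, div_lt_one (by positivity)]
  nlinarith

lemma nonneg_of_hasDerivAt {f f' : ℝ → ℝ} (hf : ∀ x, HasDerivAt f (f' x) x)
    (h0 : f 0 = 0) (hd : ∀ x, 0 < x → 0 ≤ f' x) {t : ℝ} (ht : 0 ≤ t) : 0 ≤ f t := by
  have hdiff : Differentiable ℝ f := fun x => (hf x).differentiableAt
  have m : MonotoneOn f (Set.Ici 0) := by
    apply monotoneOn_of_deriv_nonneg (convex_Ici 0) hdiff.continuous.continuousOn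
      (hdiff.differentiableOn)
    intro x hx
    rw [interior_Ici, Set.mem_Ioi] at hx
    rw [(hf x).deriv]
    exact hd x hx
  calc (0:ℝ) = f 0 := h0.symm
  _ ≤ f t := m (Set.self_mem_Ici) ht ht

lemma tanh_nonneg {t : ℝ} (ht : 0 ≤ t) : 0 ≤ Real.tanh t :=
  nonneg_of_hasDerivAt (f := Real.tanh) (f' := fun x => 1 - Real.tanh x ^ 2)
    hasDerivAt_tanh Real.tanh_zero (fun x _ => by nlinarith [_root_.tanh_sq_lt_one x]) ht

lemma tanh_le_self {t : ℝ} (ht : 0 ≤ t) : Real.tanh t ≤ t := by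
  have h := nonneg_of_hasDerivAt (f := fun x => x - Real.tanh x)
    (f' := fun x => Real.tanh x ^ 2)
    (fun x => ((hasDerivAt_id x).sub (hasDerivAt_tanh x)).congr_deriv (by ring))
    (by simp) (fun x _ => sq_nonneg _) ht
  simp only [sub_nonneg] at h
  exact h

lemma tanh_ge_cubic {t : ℝ} (ht : 0 ≤ t) : t - t^3/3 ≤ Real.tanh t := by
  have h := nonneg_of_hasDerivAt (f := fun x => Real.tanh x - (x - x^3/3))
    (f' := fun x => x^2 - Real.tanh x ^ 2)
    (fun x => by
      have h1 := (hasDerivAt_tanh x).sub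
        (((hasDerivAt_id x).sub (((hasDerivAt_pow 3 x)).div_const 3)))
      refine h1.congr_deriv ?_
      push_cast
      ring)
    (by simp) (fun x hx => by
      nlinarith [tanh_le_self hx.le, tanh_nonneg hx.le]) ht
  simp only [sub_nonneg] at h
  exact h

lemma tanh_le_quintic {t : ℝ} (ht : 0 ≤ t) : Real.tanh t ≤ t - t^3/3 + 2*t^5/15 := by
  have h := nonneg_of_hasDerivAt (f := fun x => (x - x^3/3 + 2*x^5/15) - Real.tanh x)
    (f' := fun x => Real.tanh x ^ 2 - (x^2 - 2*x^4/3))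
    (fun x => by
      have h1 := (((hasDerivAt_id x).sub ((hasDerivAt_pow 3 x).div_const 3)).add
        (((hasDerivAt_pow 5 x).const_mul 2).div_const 15)).sub (hasDerivAt_tanh x)
      refine h1.congr_deriv ?_
      push_cast
      ring)
    (by simp) (fun x hx => by
      rcases le_or_gt x (Real.sqrt 3) with hc | hc
      · have h3 : x - x^3/3 ≤ Real.tanh x := tanh_ge_cubic hx.le
        have h4 : 0 ≤ x - x^3/3 := by
          have : x^2 ≤ 3 := by
            nlinarith [Real.sq_sqrt (by norm_num : (3:ℝ) ≥ 0), Real.sqrt_nonneg 3]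
          nlinarith
        nlinarith [pow_le_pow_left₀ h4 h3 2, sq_nonneg (x^3), pow_pos hx 6]
      · have : 3 < x^2 := by
          nlinarith [Real.sq_sqrt (by norm_num : (3:ℝ) ≥ 0), Real.sqrt_nonneg 3]
        nlinarith [sq_nonneg (Real.tanh x)]) ht
  simp only [sub_nonneg] at h
  exact h


lemma s_upper {t : ℝ} (h0 : 0 ≤ t) (h1 : t ≤ 1) :
    Real.sqrt (t * Real.tanh t) ≤ t * (1 - t^2/6 + t^4/15) := by
  have ht2 : t^2 ≤ 1 := by nlinarith
  have hpos : 0 ≤ t * (1 - t^2/6 + t^4/15) :=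
    mul_nonneg h0 (by nlinarith [pow_nonneg h0 4])
  rw [show t * (1 - t^2/6 + t^4/15)
      = Real.sqrt ((t * (1 - t^2/6 + t^4/15))^2) from (Real.sqrt_sq hpos).symm]
  apply Real.sqrt_le_sqrt
  have h2 := tanh_le_quintic h0
  have h86 : t^8 ≤ t^6 := by nlinarith [pow_nonneg h0 6, pow_nonneg h0 8]
  nlinarith [mul_le_mul_of_nonneg_left h2 h0, pow_nonneg h0 6, pow_nonneg h0 10, h86]

lemma s_lower {t : ℝ} (h0 : 0 ≤ t) (h1 : t ≤ 1) :
    t * (1 - t^2/6 - t^4/18) ≤ Real.sqrt (t * Real.tanh t) := by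
  have ht2 : t^2 ≤ 1 := by nlinarith
  have hpos : 0 ≤ t * (1 - t^2/6 - t^4/18) :=
    mul_nonneg h0 (by nlinarith [pow_nonneg h0 4])
  rw [show t * (1 - t^2/6 - t^4/18)
      = Real.sqrt ((t * (1 - t^2/6 - t^4/18))^2) from (Real.sqrt_sq hpos).symm]
  apply Real.sqrt_le_sqrt
  have h2 := tanh_ge_cubic h0
  have h86 : t^8 ≤ t^6 := by nlinarith [pow_nonneg h0 6, pow_nonneg h0 8]
  have h106 : t^10 ≤ t^6 := by nlinarith [pow_nonneg h0 6, pow_nonneg h0 10, pow_nonneg h0 8]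
  nlinarith [mul_le_mul_of_nonneg_left h2 h0, pow_nonneg h0 6, h86, h106]

lemma term_eq {h x : ℝ} (hh : 0 ≤ h) (hx : 0 ≤ x) :
    Real.sqrt h * (x ^ ((1:ℝ)/4) * Real.sqrt (Real.tanh (h * Real.sqrt x)))
      = Real.sqrt ((h * Real.sqrt x) * Real.tanh (h * Real.sqrt x)) := by
  have h4 : x ^ ((1:ℝ)/4) = Real.sqrt (Real.sqrt x) := by
    rw [show ((1:ℝ)/4) = (1/2) * (1/2) by norm_num, Real.rpow_mul hx,
      ← Real.sqrt_eq_rpow, ← Real.sqrt_eq_rpow]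
  rw [h4, Real.sqrt_mul (by positivity : (0:ℝ) ≤ h * Real.sqrt x), Real.sqrt_mul hh]
  ring

lemma F_mul {β h : ℝ} (hβ : 0 ≤ β) (hh : 0 ≤ h) :
    Real.sqrt h * F β h = 3 * Real.sqrt (h * Real.tanh h)
      - Real.sqrt ((h * Real.sqrt (1+β)) * Real.tanh (h * Real.sqrt (1+β)))
      - Real.sqrt ((h * Real.sqrt (4+β)) * Real.tanh (h * Real.sqrt (4+β))) := by
  unfold F
  rw [mul_sub, mul_sub, term_eq hh (by linarith : (0:ℝ) ≤ 1+β),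
    term_eq hh (by linarith : (0:ℝ) ≤ 4+β), Real.sqrt_mul hh]
  ring

lemma tanh_strictMono : StrictMono Real.tanh := by
  apply strictMono_of_deriv_pos
  intro x
  rw [(hasDerivAt_tanh x).deriv]
  nlinarith [_root_.tanh_sq_lt_one x]

lemma tanh_pos {t : ℝ} (ht : 0 < t) : 0 < Real.tanh t := by
  have := tanh_strictMono ht
  rwa [Real.tanh_zero] at this

lemma T_lt {h x y : ℝ} (hh : 0 < h) (hx : 0 < x) (hxy : x < y) :
    x ^ ((1:ℝ)/4) * Real.sqrt (Real.tanh (h * Real.sqrt x))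
      < y ^ ((1:ℝ)/4) * Real.sqrt (Real.tanh (h * Real.sqrt y)) := by
  have hsx : 0 < Real.sqrt x := Real.sqrt_pos.mpr hx
  apply mul_lt_mul
  · exact Real.rpow_lt_rpow hx.le hxy (by norm_num)
  · exact Real.sqrt_le_sqrt (tanh_strictMono.monotone
      (mul_le_mul_of_nonneg_left (Real.sqrt_le_sqrt hxy.le) hh.le))
  · exact Real.sqrt_pos.mpr (tanh_pos (by positivity))
  · exact Real.rpow_nonneg (by linarith) _

lemma F_anti_s5 {h β₁ β₂ : ℝ} (hh : 0 < h) (h1 : 0 ≤ β₁) (h12 : β₁ < β₂) :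
    F β₂ h < F β₁ h := by
  unfold F
  have t1 := T_lt (x := 1 + β₁) (y := 1 + β₂) hh (by linarith) (by linarith)
  have t2 := T_lt (x := 4 + β₁) (y := 4 + β₂) hh (by linarith) (by linarith)
  linarith

lemma sqrt_le_poly {x B : ℝ} (hB : 0 ≤ B) (h : x ≤ B^2) : Real.sqrt x ≤ B := by
  calc Real.sqrt x ≤ Real.sqrt (B^2) := Real.sqrt_le_sqrt h
  _ = B := Real.sqrt_sq hB

lemma poly_le_sqrt {x B : ℝ} (hB : 0 ≤ B) (h : B^2 ≤ x) : B ≤ Real.sqrt x := by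
  calc B = Real.sqrt (B^2) := (Real.sqrt_sq hB).symm
  _ ≤ Real.sqrt x := Real.sqrt_le_sqrt h


set_option maxHeartbeats 1000000 in
lemma key_pos {ε h : ℝ} (hε : 0 < ε) (hε1 : ε ≤ 1) (hh : 0 < h) (hh3 : h ≤ 1/3)
    (hsm : h^2 < 3*ε/104) : 0 < F ((4/3 - ε)*h^2) h := by
  set β : ℝ := (4/3 - ε)*h^2 with hβdef
  have hh2 : 0 ≤ h^2 := sq_nonneg h
  have hh29 : h^2 ≤ 1/9 := by nlinarith
  have hβ0 : 0 ≤ β := by rw [hβdef]; nlinarith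
  have hβ1 : β ≤ 1 := by rw [hβdef]; nlinarith
  set a : ℝ := Real.sqrt (1+β) with hadef
  set c : ℝ := Real.sqrt (4+β) with hcdef
  have ha2 : a^2 = 1+β := Real.sq_sqrt (by linarith)
  have hc2 : c^2 = 4+β := Real.sq_sqrt (by linarith)
  have ha1 : 1 ≤ a := poly_le_sqrt (by norm_num) (by nlinarith)
  have hc1 : 2 ≤ c := poly_le_sqrt (by norm_num) (by nlinarith)
  have haU : a ≤ 1 + β/2 := sqrt_le_poly (by linarith) (by nlinarith)
  have hcU : c ≤ 2 + β/4 := sqrt_le_poly (by linarith) (by nlinarith)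
  have haU' : a ≤ 3/2 := by linarith
  have hcU' : c ≤ 9/4 := by linarith
  have hA3 : a^3 = a*(1+β) := by rw [← ha2]; ring
  have hC3 : c^3 = c*(4+β) := by rw [← hc2]; ring
  have hA5 : a^5 = a*(1+β)^2 := by rw [← ha2]; ring
  have hC5 : c^5 = c*(4+β)^2 := by rw [← hc2]; ring
  -- s bounds
  have hah0 : 0 ≤ h*a := by positivity
  have hch0 : 0 ≤ h*c := by positivity
  have hah1 : h*a ≤ 1 := by nlinarith
  have hch1 : h*c ≤ 1 := by nlinarith
  have e1 := s_lower hh.le (by linarith : h ≤ 1)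
  have e2 := s_upper hah0 hah1
  have e3 := s_upper hch0 hch1
  -- scalar inequalities
  have d1 : (a+c)*h ≤ (3 + 3*β/4)*h := by
    apply mul_le_mul_of_nonneg_right _ hh.le; linarith
  have d2 : (9+3*β)*h^3 ≤ (a^3+c^3)*h^3 := by
    apply mul_le_mul_of_nonneg_right _ (by positivity)
    rw [hA3, hC3]
    have u1 := mul_le_mul_of_nonneg_right ha1 (show (0:ℝ) ≤ 1+β by linarith)
    have u2 := mul_le_mul_of_nonneg_right hc1 (show (0:ℝ) ≤ 4+β by linarith)
    linarith
  have d3 : (a^5+c^5)*h^5 ≤ 63*h^5 := by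
    apply mul_le_mul_of_nonneg_right _ (by positivity)
    rw [hA5, hC5]
    have b1 : (1+β)^2 ≤ 4 := by nlinarith
    have b2 : (4+β)^2 ≤ 25 := by nlinarith
    have u1 : a*(1+β)^2 ≤ (3/2)*4 := mul_le_mul haU' b1 (by positivity) (by norm_num)
    have u2 : c*(4+β)^2 ≤ (9/4)*25 := mul_le_mul hcU' b2 (by positivity) (by norm_num)
    linarith
  have d4 : h^5 < (3*ε/104)*h^3 := by
    have h5 := mul_lt_mul_of_pos_right hsm (pow_pos hh 3)
    calc h^5 = h^2*h^3 := by ring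
    _ < (3*ε/104)*h^3 := h5
  have d5 : 0 ≤ β*h^3 := mul_nonneg hβ0 (by positivity)
  have eβ : β*h = (4/3)*h^3 - ε*h^3 := by rw [hβdef]; ring
  -- combine
  have hP : 0 < 3*(h*(1 - h^2/6 - h^4/18)) - (h*a)*(1-(h*a)^2/6+(h*a)^4/15)
      - (h*c)*(1-(h*c)^2/6+(h*c)^4/15) := by
    have hε3 : 0 < ε*h^3 := by positivity
    linarith [d1, d2, d3, d4, d5, eβ, hε3]
  have hS : 0 < Real.sqrt h * F β h := by
    rw [F_mul hβ0 hh.le]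
    linarith [e1, e2, e3, hP]
  have hsq : 0 < Real.sqrt h := Real.sqrt_pos.mpr hh
  rcases mul_pos_iff.mp hS with ⟨_, hF⟩ | ⟨h1, _⟩
  · exact hF
  · linarith

set_option maxHeartbeats 4000000 in
lemma key_neg {ε h : ℝ} (hε : 0 < ε) (hε1 : ε ≤ 1) (hh : 0 < h) (hh3 : h ≤ 1/3)
    (hsm : h^2 < 3*ε/104) : F ((4/3 + ε)*h^2) h < 0 := by
  set β : ℝ := (4/3 + ε)*h^2 with hβdef
  have hh2 : 0 ≤ h^2 := sq_nonneg h
  have hh29 : h^2 ≤ 1/9 := by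
    have := mul_le_mul hh3 hh3 hh.le (by norm_num)
    calc h^2 = h*h := sq h
    _ ≤ 1/9 := by linarith only [this]
  have hβ0 : 0 ≤ β := by rw [hβdef]; nlinarith only [sq_nonneg h, hε]
  have hβu : β ≤ (7/3)*h^2 := by rw [hβdef]; nlinarith only [sq_nonneg h, hε1]
  have hβ1 : β ≤ 1 := by linarith only [hβu, hh29]
  set a : ℝ := Real.sqrt (1+β) with hadef
  set c : ℝ := Real.sqrt (4+β) with hcdef
  have ha2 : a^2 = 1+β := Real.sq_sqrt (by linarith)
  have hc2 : c^2 = 4+β := Real.sq_sqrt (by linarith)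
  have ha1 : 1 ≤ a := poly_le_sqrt (by norm_num) (by linarith only [hβ0])
  have hc1 : 2 ≤ c := poly_le_sqrt (by norm_num) (by linarith only [hβ0])
  have haU : a ≤ 1 + β/2 := sqrt_le_poly (by linarith) (by nlinarith only [hβ0, sq_nonneg β])
  have hcU : c ≤ 2 + β/4 := sqrt_le_poly (by linarith) (by nlinarith only [hβ0, sq_nonneg β])
  have hb3 : β^3 ≤ β^2 := pow_le_pow_of_le_one hβ0 hβ1 (by norm_num)
  have hb4 : β^4 ≤ β^3 := pow_le_pow_of_le_one hβ0 hβ1 (by norm_num)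
  have hb30 : 0 ≤ β^3 := pow_nonneg hβ0 3
  have hsb : 0 ≤ β^2 := sq_nonneg β
  have haL : 1 + β/2 - β^2/8 ≤ a := poly_le_sqrt (by nlinarith only [hβ0, hβ1, sq_nonneg β]) (by nlinarith only [hb3, hb4, hb30, hβ0, hβ1])
  have hcL : 2 + β/4 - β^2/32 ≤ c := poly_le_sqrt (by nlinarith only [hβ0, hβ1, sq_nonneg β]) (by nlinarith only [hb3, hb4, hb30, hsb, hβ0, hβ1])
  have haU' : a ≤ 3/2 := by linarith
  have hcU' : c ≤ 9/4 := by linarith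
  have hA3 : a^3 = a*(1+β) := by rw [← ha2]; ring
  have hC3 : c^3 = c*(4+β) := by rw [← hc2]; ring
  have hA5 : a^5 = a*(1+β)^2 := by rw [← ha2]; ring
  have hC5 : c^5 = c*(4+β)^2 := by rw [← hc2]; ring
  have hah0 : 0 ≤ h*a := by positivity
  have hch0 : 0 ≤ h*c := by positivity
  have hah1 : h*a ≤ 1 := by
    have := mul_le_mul hh3 haU' (by positivity) (by norm_num)
    linarith only [this]
  have hch1 : h*c ≤ 1 := by
    have := mul_le_mul hh3 hcU' (by positivity) (by norm_num)
    linarith only [this]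
  have e1 := s_upper hh.le (by linarith : h ≤ 1)
  have e2 := s_lower hah0 hah1
  have e3 := s_lower hch0 hch1
  -- scalar inequalities
  have d1 : (3 + 3*β/4 - β^2)*h ≤ (a+c)*h := by
    apply mul_le_mul_of_nonneg_right _ hh.le
    linarith only [haL, hcL, sq_nonneg β, hβ0]
  have d2 : (a^3+c^3)*h^3 ≤ (9 + 9*β/2 + 3*β^2/4)*h^3 := by
    apply mul_le_mul_of_nonneg_right _ (by positivity)
    rw [hA3, hC3]
    have u1 := mul_le_mul_of_nonneg_right haU (show (0:ℝ) ≤ 1+β by linarith)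
    have u2 := mul_le_mul_of_nonneg_right hcU (show (0:ℝ) ≤ 4+β by linarith)
    linarith only [u1, u2, hsb, hβ0]
  have d3 : (a^5+c^5)*h^5 ≤ 63*h^5 := by
    apply mul_le_mul_of_nonneg_right _ (by positivity)
    rw [hA5, hC5]
    have b1 : (1+β)^2 ≤ 4 := by
      calc (1+β)^2 ≤ 2^2 := pow_le_pow_left₀ (by linarith) (by linarith) 2
      _ = 4 := by norm_num
    have b2 : (4+β)^2 ≤ 25 := by
      calc (4+β)^2 ≤ 5^2 := pow_le_pow_left₀ (by linarith) (by linarith) 2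
      _ = 25 := by norm_num
    have u1 : a*(1+β)^2 ≤ (3/2)*4 := mul_le_mul haU' b1 (by positivity) (by norm_num)
    have u2 : c*(4+β)^2 ≤ (9/4)*25 := mul_le_mul hcU' b2 (by positivity) (by norm_num)
    linarith
  have d4 : h^5 < (3*ε/104)*h^3 := by
    have h5 := mul_lt_mul_of_pos_right hsm (pow_pos hh 3)
    calc h^5 = h^2*h^3 := by ring
    _ < (3*ε/104)*h^3 := h5
  have hβ2 : β^2 ≤ (49/9)*h^4 := by
    have hm := mul_le_mul hβu hβu hβ0 (by positivity : (0:ℝ) ≤ (7/3)*h^2)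
    calc β^2 = β*β := sq β
    _ ≤ ((7/3)*h^2)*((7/3)*h^2) := hm
    _ = (49/9)*h^4 := by ring
  have q1 : β^2*h ≤ (49/9)*h^5 := by
    have := mul_le_mul_of_nonneg_right hβ2 hh.le
    calc β^2*h ≤ ((49/9)*h^4)*h := this
    _ = (49/9)*h^5 := by ring
  have q2 : β*h^3 ≤ (7/3)*h^5 := by
    have := mul_le_mul_of_nonneg_right hβu (pow_nonneg hh.le 3)
    calc β*h^3 ≤ ((7/3)*h^2)*h^3 := this
    _ = (7/3)*h^5 := by ring
  have q3 : β^2*h^3 ≤ (49/9)*h^5 := by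
    have h1' := mul_le_mul_of_nonneg_right hβ2 (pow_nonneg hh.le 3)
    have h75 : h^7 ≤ h^5 := by
      have := mul_le_mul_of_nonneg_left hh29 (pow_nonneg hh.le 5)
      calc h^7 = h^5*h^2 := by ring
      _ ≤ h^5*(1/9) := this
      _ ≤ h^5 := by linarith only [pow_nonneg hh.le 5]
    calc β^2*h^3 ≤ ((49/9)*h^4)*h^3 := h1'
    _ = (49/9)*h^7 := by ring
    _ ≤ (49/9)*h^5 := by linarith
  have eβ : β*h = (4/3)*h^3 + ε*h^3 := by rw [hβdef]; ring
  have hε3 : 0 < ε*h^3 := by positivity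
  have hP : 3*(h*(1 - h^2/6 + h^4/15)) - (h*a)*(1-(h*a)^2/6-(h*a)^4/18)
      - (h*c)*(1-(h*c)^2/6-(h*c)^4/18) < 0 := by
    linarith only [d1, d2, d3, d4, q1, q2, q3, eβ, hε3]
  have hS : Real.sqrt h * F β h < 0 := by
    rw [F_mul hβ0 hh.le]
    linarith only [e1, e2, e3, hP]
  have hsq : 0 < Real.sqrt h := Real.sqrt_pos.mpr hh
  rcases mul_neg_iff.mp hS with ⟨_, hF⟩ | ⟨h1, _⟩
  · exact hF
  · linarith

/-- If `b h` is the root of `F(·,h)` in `(0,3)` for every `h > 0`, then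
`b(h)/h² → 4/3` as `h → 0⁺`. -/
theorem stmt5 (b : ℝ → ℝ)
    (hb : ∀ h : ℝ, 0 < h → 0 < b h ∧ b h < 3 ∧ F (b h) h = 0) :
    Filter.Tendsto (fun h => b h / h ^ 2) (nhdsWithin 0 (Set.Ioi 0))
      (nhds (4 / 3)) := by
  rw [Metric.tendsto_nhdsWithin_nhds]
  intro ε hε
  set e : ℝ := min ε 1 with hedef
  have he0 : 0 < e := lt_min hε one_pos
  have he1 : e ≤ 1 := min_le_right _ _
  have heε : e ≤ ε := min_le_left _ _
  refine ⟨min (1/3) (Real.sqrt (3*e/104)), lt_min (by norm_num)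
    (Real.sqrt_pos.mpr (by positivity)), ?_⟩
  intro h hmem hdist
  have hh : 0 < h := hmem
  rw [Real.dist_eq, sub_zero, abs_of_pos hh] at hdist
  have hh3 : h ≤ 1/3 := le_of_lt (lt_of_lt_of_le hdist (min_le_left _ _))
  have hsm : h^2 < 3*e/104 := by
    have h1 : h < Real.sqrt (3*e/104) := lt_of_lt_of_le hdist (min_le_right _ _)
    have := mul_lt_mul'' h1 h1 hh.le hh.le
    calc h^2 = h*h := sq h
    _ < Real.sqrt (3*e/104) * Real.sqrt (3*e/104) := this
    _ = 3*e/104 := Real.mul_self_sqrt (by positivity)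
  obtain ⟨hb0, hb3, hbF⟩ := hb h hh
  have hfp := key_pos he0 he1 hh hh3 hsm
  have hfn := key_neg he0 he1 hh hh3 hsm
  have h2 : (0:ℝ) < h^2 := by positivity
  have hlow : (4/3 - e)*h^2 < b h := by
    by_contra hcon
    push_neg at hcon
    rcases eq_or_lt_of_le hcon with heq | hlt
    · rw [heq] at hbF; rw [hbF] at hfp; exact lt_irrefl 0 hfp
    · have := F_anti_s5 hh hb0.le hlt
      rw [hbF] at this
      linarith
  have hhigh : b h < (4/3 + e)*h^2 := by
    by_contra hcon
    push_neg at hcon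
    rcases eq_or_lt_of_le hcon with heq | hlt
    · rw [← heq] at hbF; rw [hbF] at hfn; exact lt_irrefl 0 hfn
    · have := F_anti_s5 hh (by positivity : (0:ℝ) ≤ (4/3 + e)*h^2) hlt
      rw [hbF] at this
      linarith
  rw [Real.dist_eq, abs_lt]
  constructor
  · have : 4/3 - e < b h / h^2 := by
      rw [lt_div_iff₀ h2]
      linarith [hlow]
    linarith
  · have : b h / h^2 < 4/3 + e := by
      rw [div_lt_iff₀ h2]
      linarith [hhigh]
    linarith
end

section
/- Let β₀ > 0, M > 1, M₁ > 1, and let (x_{j,ℓ})_{j,ℓ ∈ ℕ} be nonnegative real numbers satisfying: (a) for all j ≥ 1, x_{j,0} ≤ M₁·(β₀+1)·Σ_{k=0}^{j−1} M^{j−k+1}·x_{k,0}; and (b) for all ℓ ≥ 1 and j ≥ 0, x_{j,ℓ} ≤ M₁·Σ_{k=0}^{j} M^{j−k+1}·x_{k,ℓ−1} + M₁·(β₀+1)·Σ_{k=0}^{j−1} M^{j−k+1}·x_{k,ℓ} (empty sums being zero). Then for every A > 2 + M + M₁ + (β₀+1)·M₁·M and every pair (j,ℓ) with j + ℓ ≥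 1, one has x_{j,ℓ} ≤ x_{0,0}·(A·M)^{j+ℓ}. -/
/-- The quantitative induction lemma for the coefficients of the flattened
Dirichlet–Neumann expansion. -/
theorem stmt17 (β₀ M M₁ : ℝ) (hβ : 0 < β₀) (hM : 1 < M) (hM₁ : 1 < M₁)
    (x : ℕ → ℕ → ℝ) (hnn : ∀ j ℓ : ℕ, 0 ≤ x j ℓ)
    (ha : ∀ j : ℕ, 1 ≤ j →
      x j 0 ≤ M₁ * (β₀ + 1) * ∑ k ∈ Finset.range j, M ^ (j - k + 1) * x k 0)
    (hb : ∀ j ℓ : ℕ,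
      x j (ℓ + 1) ≤ M₁ * ∑ k ∈ Finset.range (j + 1), M ^ (j - k + 1) * x k ℓ
        + M₁ * (β₀ + 1) * ∑ k ∈ Finset.range j, M ^ (j - k + 1) * x k (ℓ + 1)) :
    ∀ A : ℝ, 2 + M + M₁ + (β₀ + 1) * M₁ * M < A →
      ∀ j ℓ : ℕ, 1 ≤ j + ℓ → x j ℓ ≤ x 0 0 * (A * M) ^ (j + ℓ) := by
  intro A hA
  have hM0 : (0:ℝ) < M := by linarith
  have hM₁0 : (0:ℝ) < M₁ := by linarith
  have haux : (0:ℝ) < (β₀ + 1) * M₁ * M := by positivity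
  have hA1 : (1:ℝ) < A := by linarith
  have hA0 : (0:ℝ) < A := by linarith
  have hAm : (0:ℝ) < A - 1 := by linarith
  have hx0 : 0 ≤ x 0 0 := hnn 0 0
  have hcomm : (β₀ + 1) * M₁ * M = M₁ * (β₀ + 1) * M := by ring
  have hkey1 : M₁ * (β₀ + 1) * M ≤ A - 1 := by linarith
  have hkey2 : M₁ + M₁ * (β₀ + 1) * M ≤ A - 1 := by linarith
  have geom : ∀ m : ℕ, ∑ k ∈ Finset.range m, A ^ k ≤ A ^ m / (A - 1) := by
    intro m
    rw [geom_sum_eq (ne_of_gt hA1)]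
    rw [div_le_div_iff₀ hAm hAm]
    nlinarith [pow_pos hA0 m]
  -- per-term identity
  have hterm : ∀ j k ℓ : ℕ, k ≤ j →
      M ^ (j - k + 1) * (x 0 0 * (A * M) ^ (k + ℓ))
        = x 0 0 * ((M ^ (j + 1 + ℓ) * A ^ ℓ) * A ^ k) := by
    intro j k ℓ hk
    have e : M ^ (j - k + 1) * M ^ (k + ℓ) = M ^ (j + 1 + ℓ) := by
      rw [← pow_add]; congr 1; omega
    calc M ^ (j - k + 1) * (x 0 0 * (A * M) ^ (k + ℓ))
        = (M ^ (j - k + 1) * M ^ (k + ℓ)) * (x 0 0 * A ^ (k + ℓ)) := by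
          rw [mul_pow]; ring
      _ = M ^ (j + 1 + ℓ) * (x 0 0 * A ^ (k + ℓ)) := by rw [e]
      _ = x 0 0 * ((M ^ (j + 1 + ℓ) * A ^ ℓ) * A ^ k) := by rw [pow_add]; ring
  -- the key sum estimate
  have hsum : ∀ j ℓ m : ℕ, m ≤ j + 1 →
      (∀ k, k < m → x k ℓ ≤ x 0 0 * (A * M) ^ (k + ℓ)) →
      ∑ k ∈ Finset.range m, M ^ (j - k + 1) * x k ℓ
        ≤ x 0 0 * ((M ^ (j + 1 + ℓ) * A ^ ℓ) * (A ^ m / (A - 1))) := by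
    intro j ℓ m hm hpt
    calc ∑ k ∈ Finset.range m, M ^ (j - k + 1) * x k ℓ
        ≤ ∑ k ∈ Finset.range m, M ^ (j - k + 1) * (x 0 0 * (A * M) ^ (k + ℓ)) := by
          refine Finset.sum_le_sum fun k hk => ?_
          exact mul_le_mul_of_nonneg_left (hpt k (Finset.mem_range.mp hk)) (by positivity)
      _ = ∑ k ∈ Finset.range m, x 0 0 * ((M ^ (j + 1 + ℓ) * A ^ ℓ) * A ^ k) := by
          refine Finset.sum_congr rfl fun k hk => ?_
          exact hterm j k ℓ (by have := Finset.mem_range.mp hk; omega)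
      _ = x 0 0 * ((M ^ (j + 1 + ℓ) * A ^ ℓ) * ∑ k ∈ Finset.range m, A ^ k) := by
          rw [← Finset.mul_sum, ← Finset.mul_sum]
      _ ≤ x 0 0 * ((M ^ (j + 1 + ℓ) * A ^ ℓ) * (A ^ m / (A - 1))) := by
          refine mul_le_mul_of_nonneg_left ?_ hx0
          exact mul_le_mul_of_nonneg_left (geom m) (by positivity)
  have key : ∀ n : ℕ, ∀ j ℓ : ℕ, j + 2 * ℓ ≤ n → x j ℓ ≤ x 0 0 * (A * M) ^ (j + ℓ) := by
    intro n
    induction n with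
    | zero =>
      intro j ℓ h
      obtain rfl : j = 0 := by omega
      obtain rfl : ℓ = 0 := by omega
      simpa using le_refl (x 0 0)
    | succ n ih =>
      intro j ℓ h
      rcases ℓ with _ | ℓ
      · rcases j with _ | j
        · simpa using le_refl (x 0 0)
        · calc x (j + 1) 0
              ≤ M₁ * (β₀ + 1) * ∑ k ∈ Finset.range (j + 1), M ^ (j + 1 - k + 1) * x k 0 :=
                ha (j + 1) (by omega)
            _ ≤ M₁ * (β₀ + 1) *
                (x 0 0 * ((M ^ (j + 1 + 1 + 0) * A ^ 0) * (A ^ (j + 1) / (A - 1)))) := by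
                refine mul_le_mul_of_nonneg_left ?_ (by positivity)
                refine hsum (j + 1) 0 (j + 1) (by omega) fun k hk => ?_
                simpa using ih k 0 (by omega)
            _ = x 0 0 * ((A ^ (j + 1) * M ^ (j + 1)) * ((M₁ * (β₀ + 1) * M) / (A - 1))) := by
                ring
            _ ≤ x 0 0 * ((A ^ (j + 1) * M ^ (j + 1)) * 1) := by
                refine mul_le_mul_of_nonneg_left ?_ hx0
                exact mul_le_mul_of_nonneg_left ((div_le_one hAm).mpr hkey1) (by positivity)
            _ = x 0 0 * (A * M) ^ (j + 1 + 0) := by rw [mul_pow]; ring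
      · calc x j (ℓ + 1)
            ≤ M₁ * ∑ k ∈ Finset.range (j + 1), M ^ (j - k + 1) * x k ℓ
              + M₁ * (β₀ + 1) * ∑ k ∈ Finset.range j, M ^ (j - k + 1) * x k (ℓ + 1) :=
              hb j ℓ
          _ ≤ M₁ * (x 0 0 * ((M ^ (j + 1 + ℓ) * A ^ ℓ) * (A ^ (j + 1) / (A - 1))))
              + M₁ * (β₀ + 1) *
                (x 0 0 * ((M ^ (j + 1 + (ℓ + 1)) * A ^ (ℓ + 1)) * (A ^ j / (A - 1)))) := by
              refine add_le_add ?_ ?_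
              · refine mul_le_mul_of_nonneg_left ?_ (le_of_lt hM₁0)
                exact hsum j ℓ (j + 1) le_rfl fun k hk => ih k ℓ (by omega)
              · refine mul_le_mul_of_nonneg_left ?_ (by positivity)
                exact hsum j (ℓ + 1) j (by omega) fun k hk => ih k (ℓ + 1) (by omega)
          _ = x 0 0 * ((A ^ (j + ℓ + 1) * M ^ (j + ℓ + 1))
              * ((M₁ + M₁ * (β₀ + 1) * M) / (A - 1))) := by ring
          _ ≤ x 0 0 * ((A ^ (j + ℓ + 1) * M ^ (j + ℓ + 1)) * 1) := by
              refine mul_le_mul_of_nonneg_left ?_ hx0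
              exact mul_le_mul_of_nonneg_left ((div_le_one hAm).mpr hkey2) (by positivity)
          _ = x 0 0 * (A * M) ^ (j + (ℓ + 1)) := by rw [mul_pow]; ring
  intro j ℓ hjl
  exact key (j + 2 * ℓ) j ℓ le_rfl
end
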